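/- arXiv:2303.14898 — 4 statements merged into one kernel-verified Lean document; each statement's English description precedes it below -/
import Mathlib

section
/- Let τ > 0 be a temperature, let λ ≥ 0 be a real number (the number of positive quadruples duplicated among the negative samples), and work on a probability space. Let f be a measurable real random variable with |f| ≤ 1 almost surely (the score of the positive sample), and let g₁, g₂, … be i.i.d. measurable real random variables with |g₁| ≤ 1 almost surely (the scores of the negative samples). For each integer N ≥ 1 define the centered NCE loss ℓ_N := −(1/τ)·E[f] + E[ log( (λ/N)·exp(f/τ) + (1/N)·Σ_{i=1}^{N} exp(g_i/τ) ) ]. Then ℓ_N converges as N → ∞, and lim_{N→∞} ℓ_N = −(1/τ)·E[f] + log E[exp(g₁/τ)]. -/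
/-!
By the strong law of large numbers, the empirical mean `(1/N) ∑ exp (gᵢ/τ)` converges almost
surely to `E[exp (g₁/τ)] > 0`, while the duplicate term `(λ/N) exp (f/τ)` tends to `0`; so the
integrand converges almost surely to `log E[exp (g₁/τ)]`. Since all scores lie in `[-1, 1]`, the
argument of the logarithm stays in `[exp (-1/τ), (λ + 1) exp (1/τ)]` for `N ≥ 1`, and dominated
convergence passes the limit through the expectation.
-/

open MeasureTheory ProbabilityTheory Filter Finset Set Topology

lemma Real.exp_div_mem_Icc_of_abs_le {x r τ : ℝ} (hτ : 0 < τ) (hx : |x| ≤ r) :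
    Real.exp (x / τ) ∈ Icc (Real.exp (-r / τ)) (Real.exp (r / τ)) :=
  ⟨Real.exp_le_exp.2 (div_le_div_of_nonneg_right (abs_le.1 hx).1 hτ.le),
    Real.exp_le_exp.2 (div_le_div_of_nonneg_right (abs_le.1 hx).2 hτ.le)⟩

lemma Real.abs_log_le_of_mem_Icc {a b x : ℝ} (ha : 0 < a) (hx : x ∈ Icc a b) :
    |Real.log x| ≤ max |Real.log a| |Real.log b| :=
  abs_le_max_abs_abs (Real.log_le_log ha hx.1) (Real.log_le_log (ha.trans_le hx.1) hx.2)

lemma one_div_mul_sum_range_mem_Icc {x : ℕ → ℝ} {m M : ℝ} {N : ℕ} (hN : 0 < N)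
    (hx : ∀ i ∈ range N, x i ∈ Icc m M) :
    1 / (N : ℝ) * ∑ i ∈ range N, x i ∈ Icc m M := by
  have hN' : (0 : ℝ) < N := by exact_mod_cast hN
  rw [one_div_mul_eq_div, Set.mem_Icc, le_div_iff₀ hN', div_le_iff₀ hN']
  constructor
  · simpa [mul_comm] using card_nsmul_le_sum (range N) x m fun i hi => (hx i hi).1
  · simpa [mul_comm] using sum_le_card_nsmul (range N) x M fun i hi => (hx i hi).2

lemma perturbed_mean_mem_Icc {a b B m M : ℝ} {x : ℕ → ℝ} {N : ℕ} (hN : 0 < N)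
    (ha : 0 ≤ a) (hb : b ∈ Icc 0 B) (hx : ∀ i ∈ range N, x i ∈ Icc m M) :
    a / N * b + 1 / N * ∑ i ∈ range N, x i ∈ Icc m (a * B + M) := by
  have hmean := one_div_mul_sum_range_mem_Icc hN hx
  have haN : a / N ≤ a := div_le_self ha (by exact_mod_cast hN)
  have hpert_nonneg : 0 ≤ a / N * b := mul_nonneg (by positivity) hb.1
  have hpert_le : a / N * b ≤ a * B := mul_le_mul haN hb.2 hb.1 ha
  constructor <;> linarith [hmean.1, hmean.2]

lemma tendsto_log_perturbed_mean {x : ℕ → ℝ} {E : ℝ} (hE : E ≠ 0)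
    (hx : Tendsto (fun N : ℕ => (∑ i ∈ range N, x i) / N) atTop (𝓝 E)) (a b : ℝ) :
    Tendsto (fun N : ℕ => Real.log (a / N * b + 1 / N * ∑ i ∈ range N, x i))
      atTop (𝓝 (Real.log E)) := by
  have hpert : Tendsto (fun N : ℕ => a / N * b) atTop (𝓝 0) := by
    simpa using (tendsto_const_div_atTop_nhds_zero_nat a).mul_const b
  have hsum := hpert.add hx
  rw [zero_add] at hsum
  refine (Real.continuousAt_log hE).tendsto.comp (hsum.congr fun N => ?_)
  simp only [one_div_mul_eq_div]

theorem strong_law_ae_real_comp {Ω β : Type*} {m : MeasurableSpace Ω} [MeasurableSpace β]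
    {μ : Measure Ω} {X : ℕ → Ω → β} (hindep : Pairwise fun i j => X i ⟂ᵢ[μ] X j)
    (hident : ∀ i, IdentDistrib (X i) (X 0) μ μ) {φ : β → ℝ} (hφ : Measurable φ)
    (hint : Integrable (φ ∘ X 0) μ) :
    ∀ᵐ ω ∂μ, Tendsto (fun n : ℕ => (∑ i ∈ range n, φ (X i ω)) / n) atTop (𝓝 μ[φ ∘ X 0]) :=
  strong_law_ae_real (fun i => φ ∘ X i) hint (fun _ _ hij => (hindep hij).comp hφ hφ)
    fun i => (hident i).comp hφ

theorem centered_nce_loss_tendsto_general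
    {Ω : Type*} [MeasurableSpace Ω] (μ : Measure Ω) [IsProbabilityMeasure μ]
    (τ lam : ℝ) (hτ : 0 < τ) (hlam : 0 ≤ lam)
    (f : Ω → ℝ) (hf : Measurable f) (hfb : ∀ᵐ ω ∂μ, |f ω| ≤ 1)
    (g : ℕ → Ω → ℝ)
    (hindep : iIndepFun g μ)
    (hid : ∀ i, IdentDistrib (g i) (g 0) μ μ)
    (hgb : ∀ᵐ ω ∂μ, |g 0 ω| ≤ 1) :
    Tendsto
      (fun N : ℕ =>
        -(1 / τ) * μ[f] +
          μ[fun ω => Real.log ((lam / N) * Real.exp (f ω / τ) +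
            (1 / N) * ∑ i ∈ Finset.range N, Real.exp (g i ω / τ))])
      atTop
      (nhds (-(1 / τ) * μ[f] + Real.log (μ[fun ω => Real.exp (g 0 ω / τ)]))) := by
  have hφ : Measurable fun x : ℝ => Real.exp (x / τ) := by fun_prop
  have hg_meas : ∀ i, AEMeasurable (g i) μ := fun i => (hid i).aemeasurable_fst
  have hgb_all : ∀ᵐ ω ∂μ, ∀ i, |g i ω| ≤ 1 :=
    ae_all_iff.2 fun i => (hid i).symm.ae_snd (p := fun x => |x| ≤ 1)
      (measurableSet_le (by fun_prop) (by fun_prop)) hgb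
  have hint : Integrable (fun ω => Real.exp (g 0 ω / τ)) μ := by
    refine .of_bound (hφ.comp_aemeasurable (hg_meas 0)).aestronglyMeasurable (Real.exp (1 / τ)) ?_
    filter_upwards [hgb] with ω hω
    rw [Real.norm_of_nonneg (Real.exp_pos _).le]
    exact (Real.exp_div_mem_Icc_of_abs_le hτ hω).2
  set E := μ[fun ω => Real.exp (g 0 ω / τ)]
  have hlog_E : Real.log E = μ[fun _ => Real.log E] := by simp
  rw [hlog_E]
  refine tendsto_const_nhds.add (tendsto_integral_filter_of_dominated_convergence
    (fun _ => max |Real.log (Real.exp (-1 / τ))|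
      |Real.log (lam * Real.exp (1 / τ) + Real.exp (1 / τ))|)
    (.of_forall fun N => ?_) ?_ (integrable_const _) ?_)
  · exact (Real.measurable_log.comp_aemeasurable (by fun_prop)).aestronglyMeasurable
  · filter_upwards [eventually_gt_atTop 0] with N hN
    filter_upwards [hgb_all, hfb] with ω hgω hfω
    exact Real.abs_log_le_of_mem_Icc (Real.exp_pos _) (perturbed_mean_mem_Icc hN hlam
      ⟨(Real.exp_pos _).le, (Real.exp_div_mem_Icc_of_abs_le hτ hfω).2⟩
      fun i _ => Real.exp_div_mem_Icc_of_abs_le hτ (hgω i))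
  · filter_upwards [strong_law_ae_real_comp (fun _ _ hij => hindep.indepFun hij) hid hφ hint]
      with ω hω
    exact tendsto_log_perturbed_mean (integral_exp_pos hint).ne' hω _ _

/-- The centered NCE loss `ℓ_N` converges as `N → ∞` to
`-(1/τ)·E[f] + log E[exp(g₁/τ)]`. -/
theorem centered_nce_loss_tendsto
    {Ω : Type*} [MeasurableSpace Ω] (μ : Measure Ω) [IsProbabilityMeasure μ]
    (τ lam : ℝ) (hτ : 0 < τ) (hlam : 0 ≤ lam)
    (f : Ω → ℝ) (hf : Measurable f) (hfb : ∀ᵐ ω ∂μ, |f ω| ≤ 1)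
    (g : ℕ → Ω → ℝ) (hg : ∀ i, Measurable (g i))
    (hindep : iIndepFun g μ)
    (hid : ∀ i, IdentDistrib (g i) (g 0) μ μ)
    (hgb : ∀ᵐ ω ∂μ, |g 0 ω| ≤ 1) :
    Tendsto
      (fun N : ℕ =>
        -(1 / τ) * μ[f] +
          μ[fun ω => Real.log ((lam / N) * Real.exp (f ω / τ) +
            (1 / N) * ∑ i ∈ Finset.range N, Real.exp (g i ω / τ))])
      atTop
      (nhds (-(1 / τ) * μ[f] + Real.log (μ[fun ω => Real.exp (g 0 ω / τ)]))) :=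
  centered_nce_loss_tendsto_general μ τ lam hτ hlam f hf hfb g hindep hid hgb
end

section
/- Let τ > 0, let λ ≥ 0, and work on a probability space. Let f be a measurable real random variable with |f| ≤ 1 almost surely, and let g₁, g₂, … be identically distributed measurable real random variables with |g₁| ≤ 1 almost surely. For each integer N ≥ 1 define ℓ_N := −(1/τ)·E[f] + E[ log( (λ/N)·exp(f/τ) + (1/N)·Σ_{i=1}^{N} exp(g_i/τ) ) ] and ℓ_∞ := −(1/τ)·E[f] + log E[exp(g₁/τ)]. Then for every N ≥ 1, ℓ_N − ℓ_∞ ≤ (λ/N)·exp(2/τ). -/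
/-!
Write `A = (1/N) ∑ exp (gᵢ/τ)` and `b = (λ/N) exp (f/τ)`. Pointwise,
`log (b + A) ≤ log A + b / A`, and `b / A ≤ (λ/N) exp (2/τ)` because `b ≤ (λ/N) exp (1/τ)` and
`A ≥ exp (-1/τ)`. Jensen's inequality for `log`, via the tangent line at `E[A]`, gives
`E[log A] ≤ log E[A]`, and `E[A] = E[exp (g₁/τ)]` since the `gᵢ` are identically distributed.
-/

open MeasureTheory ProbabilityTheory Real

lemma Real.log_add_le_log_add_div {a b : ℝ} (ha : 0 < a) (hab : 0 < a + b) :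
    log (a + b) ≤ log a + b / a := by
  have h := log_le_sub_one_of_pos (div_pos hab ha)
  rw [log_div hab.ne' ha.ne', add_div, div_self ha.ne'] at h
  linarith

section Integrals

variable {Ω : Type*} [MeasurableSpace Ω] {μ : Measure Ω} {X Y : Ω → ℝ}

lemma integrable_exp_of_ae_le [IsFiniteMeasure μ] {C : ℝ} (hX : AEMeasurable X μ)
    (hXC : ∀ᵐ ω ∂μ, X ω ≤ C) : Integrable (fun ω => exp (X ω)) μ :=
  Integrable.of_bound (measurable_exp.comp_aemeasurable hX).aestronglyMeasurable (exp C) <| by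
    filter_upwards [hXC] with ω hω
    rw [norm_of_nonneg (exp_pos _).le]
    exact exp_le_exp.2 hω

lemma integrable_log_of_ae_le [IsFiniteMeasure μ] {m : ℝ} (hX : Integrable X μ) (hm : 0 < m)
    (hmX : ∀ᵐ ω ∂μ, m ≤ X ω) : Integrable (fun ω => log (X ω)) μ := by
  refine ((integrable_const |log m|).add hX.norm).mono'
    (measurable_log.comp_aemeasurable hX.aemeasurable).aestronglyMeasurable ?_
  filter_upwards [hmX] with ω hω
  simp only [Pi.add_apply, Real.norm_eq_abs]
  rw [abs_le]
  constructor
  · linarith [log_le_log hm hω, neg_abs_le (log m), abs_nonneg (X ω)]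
  · linarith [log_le_sub_one_of_pos (hm.trans_le hω), le_abs_self (X ω), abs_nonneg (log m)]

lemma integral_log_le_log_integral [IsProbabilityMeasure μ] (hX : Integrable X μ)
    (hlogX : Integrable (fun ω => log (X ω)) μ) (hpos : ∀ᵐ ω ∂μ, 0 < X ω) :
    ∫ ω, log (X ω) ∂μ ≤ log (∫ ω, X ω ∂μ) := by
  set c := ∫ ω, X ω ∂μ
  have hc : 0 < c := by
    refine (integral_nonneg_of_ae (hpos.mono fun _ h => h.le)).lt_of_ne' fun hc0 => ?_
    have hX0 := (integral_eq_zero_iff_of_nonneg_ae (hpos.mono fun _ h => h.le) hX).1 hc0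
    obtain ⟨ω, hω, hω0⟩ := (hpos.and hX0).exists
    exact hω.ne' hω0
  have htangent : Integrable (fun ω => log c + X ω / c) μ :=
    (integrable_const _).add (hX.div_const c)
  calc ∫ ω, log (X ω) ∂μ ≤ ∫ ω, (log c + X ω / c - 1) ∂μ := by
        refine integral_mono_ae hlogX (htangent.sub (integrable_const 1)) ?_
        filter_upwards [hpos] with ω hω
        have h := log_le_sub_one_of_pos (div_pos hω hc)
        rw [log_div hω.ne' hc.ne'] at h
        linarith
    _ = log c := by
        rw [integral_sub htangent (integrable_const 1),
          integral_add (integrable_const _) (hX.div_const c), integral_div,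
          show (∫ ω, X ω ∂μ) / c = 1 from div_self hc.ne']
        simp only [integral_const, probReal_univ, one_smul]
        ring

lemma integral_log_add_le [IsProbabilityMeasure μ] {m K : ℝ} (hX : Integrable X μ)
    (hY : Integrable Y μ) (hm : 0 < m) (hmX : ∀ᵐ ω ∂μ, m ≤ X ω) (hY0 : ∀ᵐ ω ∂μ, 0 ≤ Y ω)
    (hYX : ∀ᵐ ω ∂μ, Y ω ≤ K * X ω) :
    ∫ ω, log (X ω + Y ω) ∂μ ≤ log (∫ ω, X ω ∂μ) + K := by
  have hlogX := integrable_log_of_ae_le hX hm hmX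
  have hlogXY : Integrable (fun ω => log (X ω + Y ω)) μ :=
    integrable_log_of_ae_le (hX.add hY) hm <| by
      filter_upwards [hmX, hY0] with ω hmω hYω
      linarith
  calc ∫ ω, log (X ω + Y ω) ∂μ ≤ ∫ ω, (log (X ω) + K) ∂μ := by
        refine integral_mono_ae hlogXY (hlogX.add (integrable_const K)) ?_
        filter_upwards [hmX, hY0, hYX] with ω hmω hYω hYXω
        have hXω := hm.trans_le hmω
        have hratio : Y ω / X ω ≤ K := (div_le_iff₀ hXω).2 hYXω
        linarith [log_add_le_log_add_div hXω (by linarith : 0 < X ω + Y ω)]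
    _ = ∫ ω, log (X ω) ∂μ + K := by
        rw [integral_add hlogX (integrable_const K), integral_const, probReal_univ, one_smul]
    _ ≤ log (∫ ω, X ω ∂μ) + K := by
        gcongr
        exact integral_log_le_log_integral hX hlogX (hmX.mono fun _ h => hm.trans_le h)

lemma integral_sum_comp_of_identDistrib {ι α : Type*} [MeasurableSpace α] {s : Finset ι}
    {g : ι → Ω → α} {g₀ : Ω → α} (hid : ∀ i ∈ s, IdentDistrib (g i) g₀ μ μ) {u : α → ℝ}
    (hu : Measurable u) (hint : Integrable (fun ω => u (g₀ ω)) μ) :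
    ∫ ω, ∑ i ∈ s, u (g i ω) ∂μ = s.card * ∫ ω, u (g₀ ω) ∂μ := by
  have hint_i : ∀ i ∈ s, Integrable (fun ω => u (g i ω)) μ :=
    fun i hi => ((hid i hi).comp hu).integrable_iff.2 hint
  have hmean_i : ∀ i ∈ s, ∫ ω, u (g i ω) ∂μ = ∫ ω, u (g₀ ω) ∂μ :=
    fun i hi => ((hid i hi).comp hu).integral_eq
  rw [integral_finsetSum s hint_i, Finset.sum_congr rfl hmean_i, Finset.sum_const, nsmul_eq_mul]

lemma integral_log_add_mean_exp_le [IsProbabilityMeasure μ] {c r : ℝ} (hc : 0 ≤ c) {N : ℕ}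
    (hN : 0 < N) {W : Ω → ℝ} {Z : ℕ → Ω → ℝ} (hW : AEMeasurable W μ) (hWr : ∀ᵐ ω ∂μ, W ω ≤ r)
    (hid : ∀ i, IdentDistrib (Z i) (Z 0) μ μ) (hZr : ∀ᵐ ω ∂μ, |Z 0 ω| ≤ r) :
    ∫ ω, log (c / N * exp (W ω) + 1 / N * ∑ i ∈ Finset.range N, exp (Z i ω)) ∂μ ≤
      log (∫ ω, exp (Z 0 ω) ∂μ) + c / N * exp (2 * r) := by
  have hZri : ∀ i, ∀ᵐ ω ∂μ, |Z i ω| ≤ r := fun i =>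
    (hid i).symm.ae_snd (measurableSet_le measurable_abs measurable_const) hZr
  have hexp_int : ∀ i, Integrable (fun ω => exp (Z i ω)) μ := fun i =>
    integrable_exp_of_ae_le (hid i).aemeasurable_fst ((hZri i).mono fun _ h => (abs_le.1 h).2)
  set X : Ω → ℝ := fun ω => 1 / N * ∑ i ∈ Finset.range N, exp (Z i ω)
  set Y : Ω → ℝ := fun ω => c / N * exp (W ω)
  have hX : Integrable X μ := (integrable_finsetSum _ fun i _ => hexp_int i).const_mul _
  have hY : Integrable Y μ := (integrable_exp_of_ae_le hW hWr).const_mul _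
  have hmX : ∀ᵐ ω ∂μ, exp (-r) ≤ X ω := by
    filter_upwards [ae_all_iff.2 hZri] with ω hω
    have h := Finset.le_expect (Finset.nonempty_range_iff.2 hN.ne')
      fun i _ => exp_le_exp.2 (abs_le.1 (hω i)).1
    simpa [X, Finset.expect_eq_sum_div_card, div_eq_inv_mul] using h
  have hYX : ∀ᵐ ω ∂μ, Y ω ≤ c / N * exp (2 * r) * X ω := by
    filter_upwards [hWr, hmX] with ω hWω hmω
    calc Y ω ≤ c / N * exp r := by
          simp only [Y]
          gcongr
      _ = c / N * exp (2 * r) * exp (-r) := by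
          rw [mul_assoc, ← exp_add]
          ring_nf
      _ ≤ c / N * exp (2 * r) * X ω := by gcongr
  have hmean : ∫ ω, X ω ∂μ = ∫ ω, exp (Z 0 ω) ∂μ := by
    have hN0 : (N : ℝ) ≠ 0 := by positivity
    simp only [X]
    rw [integral_const_mul, integral_sum_comp_of_identDistrib (fun i _ => hid i)
      measurable_exp (hexp_int 0), Finset.card_range]
    field_simp
  have key := integral_log_add_le hX hY (exp_pos _) hmX (ae_of_all _ fun ω => by positivity) hYX
  rw [hmean] at key
  simpa only [X, Y, add_comm] using key

end Integrals

theorem centered_nce_loss_upper_deviation_general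
    {Ω : Type*} [MeasurableSpace Ω] (μ : Measure Ω) [IsProbabilityMeasure μ]
    (τ lam : ℝ) (hτ : 0 < τ) (hlam : 0 ≤ lam)
    (f : Ω → ℝ) (hf : Measurable f) (hfb : ∀ᵐ ω ∂μ, |f ω| ≤ 1)
    (g : ℕ → Ω → ℝ)
    (hid : ∀ i, IdentDistrib (g i) (g 0) μ μ)
    (hgb : ∀ᵐ ω ∂μ, |g 0 ω| ≤ 1) :
    ∀ N : ℕ, 1 ≤ N →
      (-(1 / τ) * μ[f] +
          μ[fun ω => Real.log ((lam / N) * Real.exp (f ω / τ) +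
            (1 / N) * ∑ i ∈ Finset.range N, Real.exp (g i ω / τ))]) -
        (-(1 / τ) * μ[f] + Real.log (μ[fun ω => Real.exp (g 0 ω / τ)])) ≤
      (lam / N) * Real.exp (2 / τ) := by
  intro N hN
  have hdeviation := integral_log_add_mean_exp_le (Z := fun i ω => g i ω / τ) hlam hN
    (hf.div_const τ).aemeasurable
    (hfb.mono fun _ h => div_le_div_of_nonneg_right (abs_le.1 h).2 hτ.le)
    (fun i => (hid i).comp (measurable_id.div_const τ))
    (hgb.mono fun _ h => by rw [abs_div, abs_of_pos hτ]; exact div_le_div_of_nonneg_right h hτ.le)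
  rw [show 2 * (1 / τ) = 2 / τ by ring] at hdeviation
  linarith

/-- Upper deviation of the centered NCE loss from its limit:
`ℓ_N − ℓ_∞ ≤ (λ/N)·exp(2/τ)` for every `N ≥ 1`. -/
theorem centered_nce_loss_upper_deviation
    {Ω : Type*} [MeasurableSpace Ω] (μ : Measure Ω) [IsProbabilityMeasure μ]
    (τ lam : ℝ) (hτ : 0 < τ) (hlam : 0 ≤ lam)
    (f : Ω → ℝ) (hf : Measurable f) (hfb : ∀ᵐ ω ∂μ, |f ω| ≤ 1)
    (g : ℕ → Ω → ℝ) (hg : ∀ i, Measurable (g i))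
    (hid : ∀ i, IdentDistrib (g i) (g 0) μ μ)
    (hgb : ∀ᵐ ω ∂μ, |g 0 ω| ≤ 1) :
    ∀ N : ℕ, 1 ≤ N →
      (-(1 / τ) * μ[f] +
          μ[fun ω => Real.log ((lam / N) * Real.exp (f ω / τ) +
            (1 / N) * ∑ i ∈ Finset.range N, Real.exp (g i ω / τ))]) -
        (-(1 / τ) * μ[f] + Real.log (μ[fun ω => Real.exp (g 0 ω / τ)])) ≤
      (lam / N) * Real.exp (2 / τ) :=
  centered_nce_loss_upper_deviation_general μ τ lam hτ hlam f hf hfb g hid hgb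
end

section
/- Let τ > 0, let λ ≥ 0, and work on a probability space. Let f be a measurable real random variable with |f| ≤ 1 almost surely, and let g₁, g₂, … be i.i.d. measurable real random variables with |g₁| ≤ 1 almost surely. For each integer N ≥ 1 define ℓ_N := −(1/τ)·E[f] + E[ log( (λ/N)·exp(f/τ) + (1/N)·Σ_{i=1}^{N} exp(g_i/τ) ) ] and ℓ_∞ := −(1/τ)·E[f] + log E[exp(g₁/τ)]. Then for every N ≥ 1, ℓ_∞ − ℓ_N ≤ (λ/N)·exp(2/τ) + (5/4)·N^(−2/3)·exp(1/τ)·(exp(1/τ) − exp(−1/τ)). -/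
/-!
Write `Xᵢ = exp (gᵢ / τ) ∈ [e^{-1/τ}, e^{1/τ}]`, `m = 𝔼 X₀` and `S_N` for the sample mean of
`X₁, …, X_N`. Since `λ ≥ 0`, the `λ`-term only increases the logarithm, so it suffices to bound
the Jensen gap `log m - 𝔼 log S_N`. The pointwise inequality
`log m - log x ≤ (m - x) / m + (x - m)² / (a m)` for `x ≥ a` has a linear part with mean zero,
so the gap is at most `Var S_N / (a m) = Var X₀ / (N a m)`, and the Bhatia–Davis inequality
`Var X₀ ≤ (b - m)(m - a)` turns this into `(b - a) / (N a) = e^{1/τ}(e^{1/τ} - e^{-1/τ}) / N`.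
This is the claimed bound, since `N⁻¹ ≤ N^{-2/3}`.
-/

open MeasureTheory ProbabilityTheory Real Set Finset

lemma log_sub_log_le_sub_div_add_sq_div {a m x : ℝ} (ha : 0 < a) (ham : a ≤ m) (hax : a ≤ x) :
    log m - log x ≤ (m - x) / m + (x - m) ^ 2 / (a * m) := by
  have hx : 0 < x := ha.trans_le hax
  have hm : 0 < m := ha.trans_le ham
  calc log m - log x = log (m / x) := (log_div hm.ne' hx.ne').symm
    _ ≤ m / x - 1 := log_le_sub_one_of_pos (by positivity)
    _ = (m - x) / m + (x - m) ^ 2 / (x * m) := by field_simp; ring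
    _ ≤ (m - x) / m + (x - m) ^ 2 / (a * m) := by gcongr

lemma exp_div_mem_Icc {x τ : ℝ} (hτ : 0 < τ) (hx : |x| ≤ 1) :
    exp (x / τ) ∈ Icc (exp (-(1 / τ))) (exp (1 / τ)) := by
  obtain ⟨hlo, hhi⟩ := abs_le.mp hx
  refine ⟨exp_le_exp.mpr ?_, exp_le_exp.mpr ?_⟩
  · rw [← neg_div]; gcongr
  · gcongr

noncomputable def sampleMean {Ω : Type*} (X : ℕ → Ω → ℝ) (N : ℕ) (ω : Ω) : ℝ :=
  (1 / N) * ∑ i ∈ range N, X i ω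

lemma sampleMean_mem_Icc {Ω : Type*} {X : ℕ → Ω → ℝ} {a b : ℝ} {N : ℕ} (hN : 1 ≤ N) {ω : Ω}
    (hX : ∀ i, X i ω ∈ Icc a b) : sampleMean X N ω ∈ Icc a b := by
  have hN' : (0 : ℝ) < N := by exact_mod_cast hN
  have hsum : ∀ c : ℝ, ∑ _i ∈ range N, c = N * c := fun c => by simp
  constructor
  · rw [sampleMean, one_div, le_inv_mul_iff₀ hN', ← hsum]
    exact sum_le_sum fun i _ => (hX i).1
  · rw [sampleMean, one_div, inv_mul_le_iff₀ hN', ← hsum]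
    exact sum_le_sum fun i _ => (hX i).2

section

variable {Ω : Type*} [MeasurableSpace Ω] {μ : Measure Ω}

lemma integrable_log_of_mem_Icc [IsFiniteMeasure μ] {Y : Ω → ℝ} {a b : ℝ} (ha : 0 < a)
    (hY : AEMeasurable Y μ) (hYab : ∀ᵐ ω ∂μ, Y ω ∈ Icc a b) :
    Integrable (fun ω => log (Y ω)) μ :=
  Integrable.of_mem_Icc (log a) (log b) (measurable_log.comp_aemeasurable hY) <|
    hYab.mono fun _ h => ⟨log_le_log ha h.1, log_le_log (ha.trans_le h.1) h.2⟩

lemma integral_log_le_integral_log_add [IsFiniteMeasure μ] {Y Z : Ω → ℝ} {a b c : ℝ}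
    (ha : 0 < a) (hY : AEMeasurable Y μ) (hZ : AEMeasurable Z μ)
    (hYab : ∀ᵐ ω ∂μ, Y ω ∈ Icc a b) (hZc : ∀ᵐ ω ∂μ, Z ω ∈ Icc 0 c) :
    μ[fun ω => log (Y ω)] ≤ μ[fun ω => log (Z ω + Y ω)] := by
  have hZYab : ∀ᵐ ω ∂μ, Z ω + Y ω ∈ Icc a (c + b) := by
    filter_upwards [hYab, hZc] with ω hY hZ
    exact ⟨by linarith [hY.1, hZ.1], add_le_add hZ.2 hY.2⟩
  refine integral_mono_ae (integrable_log_of_mem_Icc ha hY hYab)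
    (integrable_log_of_mem_Icc ha (hZ.add hY) hZYab) ?_
  filter_upwards [hYab, hZc] with ω hY hZ
  exact log_le_log (ha.trans_le hY.1) (le_add_of_nonneg_left hZ.1)

lemma integral_mem_Icc_of_ae_mem_Icc [IsProbabilityMeasure μ] {Y : Ω → ℝ} {a b : ℝ}
    (hY : AEMeasurable Y μ) (hYab : ∀ᵐ ω ∂μ, Y ω ∈ Icc a b) : μ[Y] ∈ Icc a b := by
  have hYint : Integrable Y μ := Integrable.of_mem_Icc a b hY hYab
  exact ⟨by simpa using integral_mono_ae (integrable_const a) hYint (hYab.mono fun _ h => h.1),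
    by simpa using integral_mono_ae hYint (integrable_const b) (hYab.mono fun _ h => h.2)⟩

lemma log_integral_sub_integral_log_le [IsProbabilityMeasure μ] {Y : Ω → ℝ} {a b : ℝ}
    (ha : 0 < a) (hY : AEMeasurable Y μ) (hYab : ∀ᵐ ω ∂μ, Y ω ∈ Icc a b) :
    log μ[Y] - μ[fun ω => log (Y ω)] ≤ Var[Y; μ] / (a * μ[Y]) := by
  set m := μ[Y]
  have hYint : Integrable Y μ := Integrable.of_mem_Icc a b hY hYab
  have ham : a ≤ m := (integral_mem_Icc_of_ae_mem_Icc hY hYab).1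
  have hlin : Integrable (fun ω => (m - Y ω) / m) μ := ((integrable_const m).sub hYint).div_const m
  have hquad : Integrable (fun ω => (Y ω - m) ^ 2 / (a * m)) μ :=
    ((memLp_of_bounded hYab hY.aestronglyMeasurable 2).sub
      (memLp_const m)).integrable_sq.div_const _
  have hlog := integrable_log_of_mem_Icc ha hY hYab
  calc log m - μ[fun ω => log (Y ω)] = ∫ ω, log m - log (Y ω) ∂μ := by
        rw [integral_sub (integrable_const _) hlog]; simp
    _ ≤ ∫ ω, (m - Y ω) / m + (Y ω - m) ^ 2 / (a * m) ∂μ :=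
        integral_mono_ae ((integrable_const _).sub hlog) (hlin.add hquad)
          (hYab.mono fun _ h => log_sub_log_le_sub_div_add_sq_div ha ham h.1)
    _ = Var[Y; μ] / (a * m) := by
        rw [integral_add hlin hquad, integral_div, integral_sub (integrable_const m) hYint,
          integral_div, ← variance_eq_integral hY]
        simp [m]

variable {X : ℕ → Ω → ℝ} (hid : ∀ i, IdentDistrib (X i) (X 0) μ μ)
include hid

lemma aemeasurable_sampleMean (N : ℕ) : AEMeasurable (sampleMean X N) μ :=
  aemeasurable_const.mul (Finset.aemeasurable_fun_sum _ fun i _ => (hid i).aemeasurable_fst)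

lemma ae_sampleMean_mem_Icc {a b : ℝ} (hXab : ∀ᵐ ω ∂μ, X 0 ω ∈ Icc a b) {N : ℕ} (hN : 1 ≤ N) :
    ∀ᵐ ω ∂μ, sampleMean X N ω ∈ Icc a b := by
  have hall : ∀ i, ∀ᵐ ω ∂μ, X i ω ∈ Icc a b :=
    fun i => (hid i).symm.ae_mem_snd measurableSet_Icc hXab
  filter_upwards [ae_all_iff.mpr hall] with ω hω
  exact sampleMean_mem_Icc hN hω

lemma integral_sampleMean (hint : Integrable (X 0) μ) {N : ℕ} (hN : 1 ≤ N) :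
    μ[sampleMean X N] = μ[X 0] := by
  have hN' : (N : ℝ) ≠ 0 := by positivity
  simp only [sampleMean]
  rw [integral_const_mul, integral_finsetSum _ fun i _ => (hid i).integrable_iff.mpr hint]
  simp [(hid _).integral_eq, hN']

lemma variance_sampleMean (hX : MemLp (X 0) 2 μ)
    (hindep : Pairwise fun i j => X i ⟂ᵢ[μ] X j) (N : ℕ) :
    Var[sampleMean X N; μ] = Var[X 0; μ] / N := by
  have hsum : Var[∑ i ∈ range N, X i; μ] = N * Var[X 0; μ] := by
    rw [IndepFun.variance_sum (fun i _ => (hid i).symm.memLp_snd hX) fun i _ j _ hij => hindep hij]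
    simp [(hid _).variance_eq]
  have : sampleMean X N = fun ω => (1 / N : ℝ) * (∑ i ∈ range N, X i) ω := by
    ext ω; simp [sampleMean]
  rw [this, variance_const_mul, hsum]
  rcases N.eq_zero_or_pos with rfl | hN
  · simp
  · field_simp

lemma log_integral_sub_integral_log_sampleMean_le [IsProbabilityMeasure μ] {a b : ℝ}
    (ha : 0 < a) (hXab : ∀ᵐ ω ∂μ, X 0 ω ∈ Icc a b) (hindep : Pairwise fun i j => X i ⟂ᵢ[μ] X j)
    {N : ℕ} (hN : 1 ≤ N) :
    log μ[X 0] - μ[fun ω => log (sampleMean X N ω)] ≤ (b - a) / (N * a) := by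
  have hX0 : AEMeasurable (X 0) μ := (hid 0).aemeasurable_fst
  obtain ⟨ham, hmb⟩ := integral_mem_Icc_of_ae_mem_Icc hX0 hXab
  have hm : 0 < μ[X 0] := ha.trans_le ham
  have hN' : (0 : ℝ) < N := by exact_mod_cast hN
  calc log μ[X 0] - μ[fun ω => log (sampleMean X N ω)]
      ≤ Var[sampleMean X N; μ] / (a * μ[sampleMean X N]) :=
        integral_sampleMean hid (Integrable.of_mem_Icc a b hX0 hXab) hN ▸
          log_integral_sub_integral_log_le ha (aemeasurable_sampleMean hid N)
            (ae_sampleMean_mem_Icc hid hXab hN)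
    _ = Var[X 0; μ] / N / (a * μ[X 0]) := by
        rw [variance_sampleMean hid (memLp_of_bounded hXab hX0.aestronglyMeasurable 2) hindep,
          integral_sampleMean hid (Integrable.of_mem_Icc a b hX0 hXab) hN]
    _ ≤ (b - μ[X 0]) * (μ[X 0] - a) / N / (a * μ[X 0]) := by
        gcongr; exact variance_le_sub_mul_sub hXab hX0
    _ ≤ (b - a) / (N * a) := by
        rw [div_div, div_le_div_iff₀ (by positivity) (by positivity)]
        have : (b - μ[X 0]) * (μ[X 0] - a) ≤ (b - a) * μ[X 0] := by nlinarith
        nlinarith [mul_le_mul_of_nonneg_right this (by positivity : (0 : ℝ) ≤ N * a)]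

end

theorem centered_nce_loss_lower_deviation_general
    {Ω : Type*} [MeasurableSpace Ω] (μ : Measure Ω) [IsProbabilityMeasure μ]
    (τ lam : ℝ) (hτ : 0 < τ) (hlam : 0 ≤ lam)
    (f : Ω → ℝ) (hf : Measurable f) (hfb : ∀ᵐ ω ∂μ, |f ω| ≤ 1)
    (g : ℕ → Ω → ℝ)
    (hindep : iIndepFun g μ)
    (hid : ∀ i, IdentDistrib (g i) (g 0) μ μ)
    (hgb : ∀ᵐ ω ∂μ, |g 0 ω| ≤ 1) :
    ∀ N : ℕ, 1 ≤ N →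
      (-(1 / τ) * μ[f] + Real.log (μ[fun ω => Real.exp (g 0 ω / τ)])) -
        (-(1 / τ) * μ[f] +
          μ[fun ω => Real.log ((lam / N) * Real.exp (f ω / τ) +
            (1 / N) * ∑ i ∈ Finset.range N, Real.exp (g i ω / τ))]) ≤
      (lam / N) * Real.exp (2 / τ) +
        (5 / 4) * (N : ℝ) ^ (-(2 : ℝ) / 3) * Real.exp (1 / τ) *
          (Real.exp (1 / τ) - Real.exp (-(1 / τ))) := by
  intro N hN
  set a := exp (-(1 / τ))
  set b := exp (1 / τ)
  set X : ℕ → Ω → ℝ := fun i ω => exp (g i ω / τ)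
  have hexp : Measurable fun x : ℝ => exp (x / τ) := by fun_prop
  have hidX : ∀ i, IdentDistrib (X i) (X 0) μ μ := fun i => (hid i).comp hexp
  have hindX : Pairwise fun i j => X i ⟂ᵢ[μ] X j :=
    fun i j hij => (hindep.comp _ fun _ => hexp).indepFun hij
  have hXab : ∀ᵐ ω ∂μ, X 0 ω ∈ Icc a b := hgb.mono fun _ h => exp_div_mem_Icc hτ h
  have hgap := log_integral_sub_integral_log_sampleMean_le hidX (a := a) (exp_pos _) hXab hindX hN
  have hdrop : μ[fun ω => log (sampleMean X N ω)] ≤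
      μ[fun ω => log (lam / N * exp (f ω / τ) + sampleMean X N ω)] :=
    integral_log_le_integral_log_add (c := lam / N * b) (exp_pos _)
      (aemeasurable_sampleMean hidX N) (by fun_prop) (ae_sampleMean_mem_Icc hidX hXab hN)
      (hfb.mono fun _ h => ⟨by positivity, by gcongr; exact (exp_div_mem_Icc hτ h).2⟩)
  have hrate : (b - a) / (N * a) ≤ 5 / 4 * (N : ℝ) ^ (-(2 : ℝ) / 3) * b * (b - a) := by
    have hba : 0 ≤ b - a := sub_nonneg.mpr (exp_le_exp.mpr (by linarith [one_div_pos.mpr hτ]))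
    have hN' : (N : ℝ)⁻¹ ≤ (N : ℝ) ^ (-(2 : ℝ) / 3) := by
      rw [← rpow_neg_one]
      exact rpow_le_rpow_of_exponent_le (by exact_mod_cast hN) (by norm_num)
    calc (b - a) / (N * a) = b * (b - a) * (N : ℝ)⁻¹ := by
          rw [show a = b⁻¹ from exp_neg _]; field_simp
      _ ≤ b * (b - a) * (N : ℝ) ^ (-(2 : ℝ) / 3) := by gcongr
      _ ≤ 5 / 4 * (N : ℝ) ^ (-(2 : ℝ) / 3) * b * (b - a) := by
          have := mul_nonneg (mul_nonneg (exp_pos (1 / τ)).le hba)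
            (rpow_nonneg N.cast_nonneg (-(2 : ℝ) / 3))
          nlinarith
  have hlam : 0 ≤ lam / N * exp (2 / τ) := by positivity
  simp only [sampleMean] at hgap hdrop
  linarith

/-- Lower deviation of the centered NCE loss from its limit:
`ℓ_∞ − ℓ_N ≤ (λ/N)·exp(2/τ) + (5/4)·N^(−2/3)·exp(1/τ)·(exp(1/τ) − exp(−1/τ))`
for every `N ≥ 1`. -/
theorem centered_nce_loss_lower_deviation
    {Ω : Type*} [MeasurableSpace Ω] (μ : Measure Ω) [IsProbabilityMeasure μ]
    (τ lam : ℝ) (hτ : 0 < τ) (hlam : 0 ≤ lam)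
    (f : Ω → ℝ) (hf : Measurable f) (hfb : ∀ᵐ ω ∂μ, |f ω| ≤ 1)
    (g : ℕ → Ω → ℝ) (hg : ∀ i, Measurable (g i))
    (hindep : iIndepFun g μ)
    (hid : ∀ i, IdentDistrib (g i) (g 0) μ μ)
    (hgb : ∀ᵐ ω ∂μ, |g 0 ω| ≤ 1) :
    ∀ N : ℕ, 1 ≤ N →
      (-(1 / τ) * μ[f] + Real.log (μ[fun ω => Real.exp (g 0 ω / τ)])) -
        (-(1 / τ) * μ[f] +
          μ[fun ω => Real.log ((lam / N) * Real.exp (f ω / τ) +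
            (1 / N) * ∑ i ∈ Finset.range N, Real.exp (g i ω / τ))]) ≤
      (lam / N) * Real.exp (2 / τ) +
        (5 / 4) * (N : ℝ) ^ (-(2 : ℝ) / 3) * Real.exp (1 / τ) *
          (Real.exp (1 / τ) - Real.exp (-(1 / τ))) :=
  centered_nce_loss_lower_deviation_general μ τ lam hτ hlam f hf hfb g hindep hid hgb
end

section
/- Let τ > 0, let λ ≥ 0, and let 0 ≤ ε ≤ 1 be the proportion of correct pseudo data. Work on a probability space. Let f and f′ be measurable real random variables with |f| ≤ 1 and |f′| ≤ 1 almost surely, let g₁, g₂, … be identically distributed measurable real random variables with |g₁| ≤ 1 almost surely, and let g′₁, g′₂, … be identically distributed measurable real random variables with |g′₁| ≤ 1 almost surely. For each integer N ≥ 1, let ℓ_N := −(1/τ)·E[f] + E[ log( (λ/N)·exp(f/τ) + (1/N)·Σ_{i=1}^{N} exp(g_i/τ) ) ] be the centered NCE loss on the correct pseudo data (which carry λ duplicates) and let ℓ⁰_N := −(1/τ)·E[f′] + E[ log( (1/N)·Σ_{i=1}^{N} exp(g′_i/τ) ) ] be the centered NCE loss on the incorrect pseudo data (which carry no duplicates).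 Define the pseudo-data loss ℓ^{ps}_N := ε·ℓ_N + (1 − ε)·ℓ⁰_N, and define ℓ^{ps}_∞ := ε·( −(1/τ)·E[f] + log E[exp(g₁/τ)] ) + (1 − ε)·( −(1/τ)·E[f′] + log E[exp(g′₁/τ)] ). Then for every N ≥ 1, ℓ^{ps}_N − ℓ^{ps}_∞ ≤ ε·(λ/N)·exp(2/τ). -/
/-!
Only the log-terms differ between `ℓ^{ps}_N` and `ℓ^{ps}_∞`. By Jensen's inequality for the
concave logarithm, `E[log(Y + mean of Z_i)] ≤ log(E Y + E Z_0)` whenever the `Z_i` are identically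
distributed, and `log(c + x) ≤ log c + x / c`. For the incorrect pseudo data (`Y = 0`) this shows
`ℓ⁰_N ≤ ℓ⁰_∞`; for the correct ones `Y = (λ/N)·exp(f/τ)` and `c = E[exp(g₁/τ)]`, and the
scores being bounded by `1` gives `E Y / c ≤ (λ/N)·exp(1/τ) / exp(-1/τ) = (λ/N)·exp(2/τ)`.
-/

open MeasureTheory ProbabilityTheory Set

lemma Real.log_add_le_log_add_div_s5 {c x : ℝ} (hc : 0 < c) (hx : 0 < c + x) :
    Real.log (c + x) ≤ Real.log c + x / c := by
  have h := Real.log_le_sub_one_of_pos (div_pos hx hc)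
  rwa [Real.log_div hx.ne' hc.ne', add_div, div_self hc.ne', add_sub_cancel_left,
    sub_le_iff_le_add'] at h

lemma Real.exp_div_mem_Icc_of_abs_le_one {τ x : ℝ} (hτ : 0 < τ) (hx : |x| ≤ 1) :
    Real.exp (x / τ) ∈ Icc (Real.exp (-1 / τ)) (Real.exp (1 / τ)) := by
  rw [abs_le] at hx
  exact ⟨Real.exp_le_exp.2 (div_le_div_of_nonneg_right hx.1 hτ.le),
    Real.exp_le_exp.2 (div_le_div_of_nonneg_right hx.2 hτ.le)⟩

lemma Finset.mean_mem_Icc {ι : Type*} {s : Finset ι} (hs : s.Nonempty) {x : ι → ℝ} {a b : ℝ}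
    (hx : ∀ i ∈ s, x i ∈ Set.Icc a b) : (1 / s.card : ℝ) * ∑ i ∈ s, x i ∈ Set.Icc a b := by
  have hcard : (s.card : ℝ) ≠ 0 := by exact_mod_cast hs.card_pos.ne'
  rw [Finset.mul_sum]
  exact (convex_Icc a b).sum_mem (w := fun _ => 1 / (s.card : ℝ)) (fun _ _ => by positivity)
    (by rw [Finset.sum_const, nsmul_eq_mul]; field_simp) hx

section
variable {Ω : Type*} [MeasurableSpace Ω] {μ : Measure Ω}

theorem integral_log_le_log_integral_s5 [IsProbabilityMeasure μ] {X : Ω → ℝ} {a b : ℝ} (ha : 0 < a)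
    (hX : AEMeasurable X μ) (hXab : ∀ᵐ ω ∂μ, X ω ∈ Icc a b) :
    ∫ ω, Real.log (X ω) ∂μ ≤ Real.log (∫ ω, X ω ∂μ) := by
  have hlog : ∀ᵐ ω ∂μ, Real.log (X ω) ∈ Icc (Real.log a) (Real.log b) := by
    filter_upwards [hXab] with ω hω
    exact ⟨Real.log_le_log ha hω.1, Real.log_le_log (ha.trans_le hω.1) hω.2⟩
  exact (strictConcaveOn_log_Ioi.concaveOn.subset (Ici_subset_Ioi.2 ha) (convex_Ici a))
    |>.le_map_integral (Real.continuousOn_log.mono fun x hx => (ha.trans_le hx).ne') isClosed_Ici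
    (hXab.mono fun _ h => h.1) (Integrable.of_mem_Icc a b hX hXab)
    (Integrable.of_mem_Icc _ _ (Real.measurable_log.comp_aemeasurable hX) hlog)

variable {Z : ℕ → Ω → ℝ} {a b : ℝ} {N : ℕ}

lemma ae_mean_mem_Icc_of_identDistrib (hid : ∀ i, IdentDistrib (Z i) (Z 0) μ μ)
    (hZ : ∀ᵐ ω ∂μ, Z 0 ω ∈ Icc a b) (hN : N ≠ 0) :
    ∀ᵐ ω ∂μ, (1 / N : ℝ) * ∑ i ∈ Finset.range N, Z i ω ∈ Icc a b := by
  have hZi : ∀ᵐ ω ∂μ, ∀ i, Z i ω ∈ Icc a b :=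
    ae_all_iff.2 fun i => (hid i).symm.ae_mem_snd measurableSet_Icc hZ
  filter_upwards [hZi] with ω hω
  simpa using Finset.mean_mem_Icc (Finset.nonempty_range_iff.2 hN) fun i _ => hω i

lemma integral_mean_of_identDistrib (hid : ∀ i, IdentDistrib (Z i) (Z 0) μ μ)
    (hZ : Integrable (Z 0) μ) (hN : N ≠ 0) :
    ∫ ω, (1 / N : ℝ) * ∑ i ∈ Finset.range N, Z i ω ∂μ = ∫ ω, Z 0 ω ∂μ := by
  rw [integral_const_mul, integral_finsetSum _ fun i _ => (hid i).integrable_iff.2 hZ]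
  simp only [fun i => (hid i).integral_eq, Finset.sum_const, Finset.card_range, nsmul_eq_mul]
  field_simp

theorem integral_log_add_mean_le [IsProbabilityMeasure μ] (ha : 0 < a)
    (hid : ∀ i, IdentDistrib (Z i) (Z 0) μ μ) (hZ : ∀ᵐ ω ∂μ, Z 0 ω ∈ Icc a b)
    {Y : Ω → ℝ} {C : ℝ} (hY : AEMeasurable Y μ)
    (hYC : ∀ᵐ ω ∂μ, Y ω ∈ Icc 0 C) (hN : N ≠ 0) :
    ∫ ω, Real.log (Y ω + (1 / N : ℝ) * ∑ i ∈ Finset.range N, Z i ω) ∂μ ≤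
      Real.log (∫ ω, Z 0 ω ∂μ) + (∫ ω, Y ω ∂μ) / ∫ ω, Z 0 ω ∂μ := by
  have hZint : Integrable (Z 0) μ := Integrable.of_mem_Icc a b (hid 0).aemeasurable_fst hZ
  have hYint : Integrable Y μ := Integrable.of_mem_Icc 0 C hY hYC
  have hc : a ≤ ∫ ω, Z 0 ω ∂μ := ((convex_Icc a b).integral_mem isClosed_Icc hZ hZint).1
  have hmean := ae_mean_mem_Icc_of_identDistrib hid hZ hN
  have hmeas : AEMeasurable (fun ω => (1 / N : ℝ) * ∑ i ∈ Finset.range N, Z i ω) μ :=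
    (Finset.aemeasurable_fun_sum _ fun i _ => (hid i).aemeasurable_fst).const_mul _
  have hsum : ∀ᵐ ω ∂μ,
      Y ω + (1 / N : ℝ) * ∑ i ∈ Finset.range N, Z i ω ∈ Icc a (C + b) := by
    filter_upwards [hYC, hmean] with ω hY hW
    constructor <;> linarith [hY.1, hY.2, hW.1, hW.2]
  calc ∫ ω, Real.log (Y ω + (1 / N : ℝ) * ∑ i ∈ Finset.range N, Z i ω) ∂μ
      ≤ Real.log (∫ ω, Y ω + (1 / N : ℝ) * ∑ i ∈ Finset.range N, Z i ω ∂μ) :=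
        integral_log_le_log_integral_s5 ha (hY.add hmeas) hsum
    _ = Real.log (∫ ω, Z 0 ω ∂μ + ∫ ω, Y ω ∂μ) := by
        rw [integral_add hYint (Integrable.of_mem_Icc a b hmeas hmean),
          integral_mean_of_identDistrib hid hZint hN, add_comm]
    _ ≤ _ := Real.log_add_le_log_add_div_s5 (ha.trans_le hc)
        (by linarith [integral_nonneg_of_ae (hYC.mono fun _ h => h.1)])

theorem integral_log_mean_le [IsProbabilityMeasure μ] (ha : 0 < a)
    (hid : ∀ i, IdentDistrib (Z i) (Z 0) μ μ) (hZ : ∀ᵐ ω ∂μ, Z 0 ω ∈ Icc a b) (hN : N ≠ 0) :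
    ∫ ω, Real.log ((1 / N : ℝ) * ∑ i ∈ Finset.range N, Z i ω) ∂μ ≤
      Real.log (∫ ω, Z 0 ω ∂μ) := by
  simpa using integral_log_add_mean_le (Y := 0) (C := 0) ha hid hZ aemeasurable_const
    (by simp) hN

lemma integral_exp_div_mem_Icc [IsProbabilityMeasure μ] {τ : ℝ} (hτ : 0 < τ) {X : Ω → ℝ}
    (hX : AEMeasurable X μ) (hX1 : ∀ᵐ ω ∂μ, |X ω| ≤ 1) :
    ∫ ω, Real.exp (X ω / τ) ∂μ ∈ Icc (Real.exp (-1 / τ)) (Real.exp (1 / τ)) := by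
  have h := hX1.mono fun _ => Real.exp_div_mem_Icc_of_abs_le_one hτ
  exact (convex_Icc _ _).integral_mem isClosed_Icc h
    (Integrable.of_mem_Icc _ _ (by fun_prop) h)

lemma integral_exp_div_div_integral_exp_div_le [IsProbabilityMeasure μ] {τ : ℝ} (hτ : 0 < τ)
    {X X' : Ω → ℝ} (hX : AEMeasurable X μ) (hX1 : ∀ᵐ ω ∂μ, |X ω| ≤ 1)
    (hX' : AEMeasurable X' μ) (hX'1 : ∀ᵐ ω ∂μ, |X' ω| ≤ 1) :
    (∫ ω, Real.exp (X ω / τ) ∂μ) / ∫ ω, Real.exp (X' ω / τ) ∂μ ≤ Real.exp (2 / τ) := by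
  calc (∫ ω, Real.exp (X ω / τ) ∂μ) / ∫ ω, Real.exp (X' ω / τ) ∂μ
      ≤ Real.exp (1 / τ) / Real.exp (-1 / τ) :=
        div_le_div₀ (Real.exp_pos _).le (integral_exp_div_mem_Icc hτ hX hX1).2 (Real.exp_pos _)
          (integral_exp_div_mem_Icc hτ hX' hX'1).1
    _ = Real.exp (2 / τ) := by rw [← Real.exp_sub]; ring_nf

end

theorem pseudo_data_loss_upper_deviation_general
    {Ω : Type*} [MeasurableSpace Ω] (μ : Measure Ω) [IsProbabilityMeasure μ]
    (τ lam ε : ℝ) (hτ : 0 < τ) (hlam : 0 ≤ lam) (hε0 : 0 ≤ ε) (hε1 : ε ≤ 1)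
    (f f' : Ω → ℝ) (hf : Measurable f)
    (hfb : ∀ᵐ ω ∂μ, |f ω| ≤ 1)
    (g g' : ℕ → Ω → ℝ)
    (hid : ∀ i, IdentDistrib (g i) (g 0) μ μ)
    (hid' : ∀ i, IdentDistrib (g' i) (g' 0) μ μ)
    (hgb : ∀ᵐ ω ∂μ, |g 0 ω| ≤ 1) (hgb' : ∀ᵐ ω ∂μ, |g' 0 ω| ≤ 1) :
    ∀ N : ℕ, 1 ≤ N →
      (ε * (-(1 / τ) * μ[f] +
            μ[fun ω => Real.log ((lam / N) * Real.exp (f ω / τ) +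
              (1 / N) * ∑ i ∈ Finset.range N, Real.exp (g i ω / τ))]) +
        (1 - ε) * (-(1 / τ) * μ[f'] +
            μ[fun ω => Real.log ((1 / N) * ∑ i ∈ Finset.range N, Real.exp (g' i ω / τ))])) -
      (ε * (-(1 / τ) * μ[f] + Real.log (μ[fun ω => Real.exp (g 0 ω / τ)])) +
        (1 - ε) * (-(1 / τ) * μ[f'] + Real.log (μ[fun ω => Real.exp (g' 0 ω / τ)]))) ≤
      ε * (lam / N) * Real.exp (2 / τ) := by
  intro N hN
  have hN0 : N ≠ 0 := Nat.one_le_iff_ne_zero.1 hN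
  have hexp : ∀ {X : Ω → ℝ}, (∀ᵐ ω ∂μ, |X ω| ≤ 1) →
      ∀ᵐ ω ∂μ, Real.exp (X ω / τ) ∈ Icc (Real.exp (-1 / τ)) (Real.exp (1 / τ)) :=
    fun h => h.mono fun _ => Real.exp_div_mem_Icc_of_abs_le_one hτ
  have hid_exp : ∀ {h : ℕ → Ω → ℝ}, (∀ i, IdentDistrib (h i) (h 0) μ μ) →
      ∀ i, IdentDistrib (fun ω => Real.exp (h i ω / τ)) (fun ω => Real.exp (h 0 ω / τ)) μ μ :=
    fun hh i => (hh i).comp (u := fun x => Real.exp (x / τ)) (by fun_prop)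
  have hY : ∀ᵐ ω ∂μ, lam / N * Real.exp (f ω / τ) ∈ Icc 0 (lam / N * Real.exp (1 / τ)) :=
    (hexp hfb).mono fun _ h => ⟨by positivity, mul_le_mul_of_nonneg_left h.2 (by positivity)⟩
  have hcorrect := integral_log_add_mean_le (Real.exp_pos _) (hid_exp hid) (hexp hgb)
    (by fun_prop) hY hN0
  have hincorrect := integral_log_mean_le (Real.exp_pos _) (hid_exp hid') (hexp hgb') hN0
  have hratio : (∫ ω, lam / N * Real.exp (f ω / τ) ∂μ) / ∫ ω, Real.exp (g 0 ω / τ) ∂μ ≤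
      lam / N * Real.exp (2 / τ) := by
    rw [integral_const_mul, mul_div_assoc]
    gcongr
    exact integral_exp_div_div_integral_exp_div_le hτ hf.aemeasurable hfb
      (hid 0).aemeasurable_fst hgb
  beta_reduce
  linarith [mul_le_mul_of_nonneg_left (hcorrect.trans (add_le_add_right hratio _)) hε0,
    mul_le_mul_of_nonneg_left hincorrect (sub_nonneg.2 hε1)]

/-- Upper deviation of the pseudo-data centered NCE loss
`ℓ^{ps}_N = ε·ℓ_N + (1−ε)·ℓ⁰_N` from its limit:
`ℓ^{ps}_N − ℓ^{ps}_∞ ≤ ε·(λ/N)·exp(2/τ)` for every `N ≥ 1`. -/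
theorem pseudo_data_loss_upper_deviation
    {Ω : Type*} [MeasurableSpace Ω] (μ : Measure Ω) [IsProbabilityMeasure μ]
    (τ lam ε : ℝ) (hτ : 0 < τ) (hlam : 0 ≤ lam) (hε0 : 0 ≤ ε) (hε1 : ε ≤ 1)
    (f f' : Ω → ℝ) (hf : Measurable f) (hf' : Measurable f')
    (hfb : ∀ᵐ ω ∂μ, |f ω| ≤ 1) (hfb' : ∀ᵐ ω ∂μ, |f' ω| ≤ 1)
    (g g' : ℕ → Ω → ℝ) (hg : ∀ i, Measurable (g i)) (hg' : ∀ i, Measurable (g' i))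
    (hid : ∀ i, IdentDistrib (g i) (g 0) μ μ)
    (hid' : ∀ i, IdentDistrib (g' i) (g' 0) μ μ)
    (hgb : ∀ᵐ ω ∂μ, |g 0 ω| ≤ 1) (hgb' : ∀ᵐ ω ∂μ, |g' 0 ω| ≤ 1) :
    ∀ N : ℕ, 1 ≤ N →
      (ε * (-(1 / τ) * μ[f] +
            μ[fun ω => Real.log ((lam / N) * Real.exp (f ω / τ) +
              (1 / N) * ∑ i ∈ Finset.range N, Real.exp (g i ω / τ))]) +
        (1 - ε) * (-(1 / τ) * μ[f'] +
            μ[fun ω => Real.log ((1 / N) * ∑ i ∈ Finset.range N, Real.exp (g' i ω / τ))])) -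
      (ε * (-(1 / τ) * μ[f] + Real.log (μ[fun ω => Real.exp (g 0 ω / τ)])) +
        (1 - ε) * (-(1 / τ) * μ[f'] + Real.log (μ[fun ω => Real.exp (g' 0 ω / τ)]))) ≤
      ε * (lam / N) * Real.exp (2 / τ) :=
  pseudo_data_loss_upper_deviation_general μ τ lam ε hτ hlam hε0 hε1 f f' hf hfb g g' hid hid' hgb
    hgb'
end
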